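/- arXiv:2603.10719 — 6 statements merged into one kernel-verified Lean document; each statement's English description precedes it below -/
import Mathlib

section
/- There exists a matrix A ∈ gl(2,ℂ) that is not adjoint c-real (i.e., A is not similar to −Ā) but such that exp(A) is c-reversible (exp(A) is similar to (exp(A)‾)⁻¹). Concretely, for real r ≠ 0, A = diag(r + 2πi, −r) is not similar to −Ā, yet exp(A) = diag(eʳ, e⁻ʳ) is similar to exp(A)⁻¹ = (exp(A)‾)⁻¹. -/
open Matrix
noncomputable section

/-- `Aff n` models the affine group `Aff(n, ℂ) = GL(n, ℂ) ⋉ ℂⁿ`,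
with elements `g = (A, v)` acting by `x ↦ A x + v`. -/
@[ext] structure Aff (n : ℕ) where
  A : GL (Fin n) ℂ
  v : Fin n → ℂ

namespace Aff

variable {n : ℕ}

instance : Mul (Aff n) :=
  ⟨fun g h => ⟨g.A * h.A, (g.A : Matrix (Fin n) (Fin n) ℂ) *ᵥ h.v + g.v⟩⟩

instance : One (Aff n) := ⟨⟨1, 0⟩⟩

instance : Inv (Aff n) :=
  ⟨fun g => ⟨g.A⁻¹, -((g.A⁻¹ : Matrix (Fin n) (Fin n) ℂ) *ᵥ g.v)⟩⟩

@[simp] lemma mul_A (g h : Aff n) : (g * h).A = g.A * h.A := rfl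
@[simp] lemma mul_v (g h : Aff n) :
    (g * h).v = (g.A : Matrix (Fin n) (Fin n) ℂ) *ᵥ h.v + g.v := rfl
@[simp] lemma one_A : (1 : Aff n).A = 1 := rfl
@[simp] lemma one_v : (1 : Aff n).v = 0 := rfl
@[simp] lemma inv_A (g : Aff n) : (g⁻¹).A = g.A⁻¹ := rfl
@[simp] lemma inv_v (g : Aff n) :
    (g⁻¹).v = -((g.A⁻¹ : Matrix (Fin n) (Fin n) ℂ) *ᵥ g.v) := rfl

instance : Group (Aff n) where
  mul_assoc a b c := by
    ext : 1
    · simp [mul_assoc]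
    · simp [Units.val_mul, mulVec_add, mulVec_mulVec, add_assoc]
  one_mul a := by
    ext : 1 <;> simp
  mul_one a := by
    ext : 1 <;> simp
  inv_mul_cancel a := by
    ext : 1 <;> simp

/-- Entrywise complex conjugation on `GL(m, ℂ)`. -/
def glConj {m : Type*} [Fintype m] [DecidableEq m] : GL m ℂ →* GL m ℂ :=
  Units.map ((starRingEnd ℂ).mapMatrix.toMonoidHom)

/-- The conjugate `ḡ = (Ā, v̄)` of an affine transformation `g = (A, v)`. -/
def bar (g : Aff n) : Aff n :=
  ⟨glConj g.A, star g.v⟩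

/-- `h ∈ Aff(n, ℂ)` is a coninvolution if `h h̄ = e`. -/
def IsConinvolution (g : Aff n) : Prop := g * bar g = 1

/-- `g` is c-reversible if `h g h⁻¹ = ḡ⁻¹` for some `h ∈ Aff(n, ℂ)`. -/
def IsCReversible (g : Aff n) : Prop :=
  ∃ h : Aff n, h * g * h⁻¹ = (bar g)⁻¹

/-- `g` is strongly c-reversible if `h g h⁻¹ = ḡ⁻¹` for some coninvolution `h`. -/
def IsStronglyCReversible (g : Aff n) : Prop :=
  ∃ h : Aff n, IsConinvolution h ∧ h * g * h⁻¹ = (bar g)⁻¹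

end Aff

/-- The matrix `A = diag(r + 2πi, -r)`. -/
def exampleMatrix (r : ℝ) : Matrix (Fin 2) (Fin 2) ℂ :=
  Matrix.diagonal ![(r : ℂ) + 2 * Real.pi * Complex.I, (-r : ℂ)]

/-- for real `r ≠ 0`, `A = diag(r + 2πi, -r)` is not similar
to `-Ā` (not adjoint c-real), yet `exp(A) = diag(eʳ, e⁻ʳ)` is similar to
`exp(A)⁻¹ = (exp(A)‾)⁻¹`, i.e. `exp(A)` is c-reversible. -/
theorem not_adjoint_c_real_but_exp_cReversible (r : ℝ) (hr : r ≠ 0) :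
    (¬ ∃ S : GL (Fin 2) ℂ,
        (S : Matrix (Fin 2) (Fin 2) ℂ) * exampleMatrix r
            * ((S⁻¹ : GL (Fin 2) ℂ) : Matrix (Fin 2) (Fin 2) ℂ)
          = -((exampleMatrix r).map (starRingEnd ℂ))) ∧
    NormedSpace.exp (exampleMatrix r)
        = Matrix.diagonal ![(Real.exp r : ℂ), (Real.exp (-r) : ℂ)] ∧
    ((NormedSpace.exp (exampleMatrix r)).map (starRingEnd ℂ))⁻¹
        = (NormedSpace.exp (exampleMatrix r))⁻¹ ∧
    ∃ S : GL (Fin 2) ℂ,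
      (S : Matrix (Fin 2) (Fin 2) ℂ) * NormedSpace.exp (exampleMatrix r)
          * ((S⁻¹ : GL (Fin 2) ℂ) : Matrix (Fin 2) (Fin 2) ℂ)
        = ((NormedSpace.exp (exampleMatrix r)).map (starRingEnd ℂ))⁻¹ := by
  have h0 : Complex.exp ((r : ℂ) + 2 * Real.pi * Complex.I) = (Real.exp r : ℂ) := by
    rw [Complex.exp_add, Complex.exp_two_pi_mul_I, mul_one, Complex.ofReal_exp]
  have h1 : Complex.exp (-(r : ℂ)) = (Real.exp (-r) : ℂ) := by
    rw [Complex.ofReal_exp, Complex.ofReal_neg]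
  have hexp : NormedSpace.exp (exampleMatrix r)
      = Matrix.diagonal ![(Real.exp r : ℂ), (Real.exp (-r) : ℂ)] := by
    rw [exampleMatrix, Matrix.exp_diagonal, Pi.exp_def]
    simp only [← Complex.exp_eq_exp_ℂ]
    refine Matrix.ext fun i j => ?_
    fin_cases i <;> fin_cases j <;>
      simp [Matrix.diagonal_apply, h0, h1, -Complex.ofReal_exp]
  have hmap : (NormedSpace.exp (exampleMatrix r)).map (starRingEnd ℂ)
      = NormedSpace.exp (exampleMatrix r) := by
    rw [hexp, Matrix.diagonal_map (map_zero _)]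
    refine Matrix.ext fun i j => ?_
    fin_cases i <;> fin_cases j <;>
      simp [Matrix.diagonal_apply, Complex.conj_ofReal, -Complex.ofReal_exp]
  refine ⟨?_, hexp, by rw [hmap], ?_⟩
  · rintro ⟨S, hS⟩
    have hdet := congrArg Matrix.det hS
    have hS1 : (S : Matrix (Fin 2) (Fin 2) ℂ).det
        * ((S⁻¹ : GL (Fin 2) ℂ) : Matrix (Fin 2) (Fin 2) ℂ).det = 1 := by
      rw [← Matrix.det_mul, ← Units.val_mul, mul_inv_cancel, Units.val_one, Matrix.det_one]
    rw [Matrix.det_mul, Matrix.det_mul, mul_comm, ← mul_assoc, mul_comm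
      ((S⁻¹ : GL (Fin 2) ℂ) : Matrix (Fin 2) (Fin 2) ℂ).det, hS1, one_mul] at hdet
    rw [exampleMatrix, Matrix.diagonal_map (map_zero _)] at hdet
    simp only [Matrix.det_neg, Matrix.det_diagonal, Fin.prod_univ_two, Fintype.card_fin,
      Matrix.cons_val_zero, Matrix.cons_val_one, Matrix.head_cons,
      Function.comp_apply, map_add, map_neg, _root_.map_mul, Complex.conj_I,
      Complex.conj_ofReal, map_ofNat] at hdet
    have hπ : (Real.pi : ℂ) ≠ 0 := by exact_mod_cast Real.pi_ne_zero
    have hrC : (r : ℂ) ≠ 0 := by exact_mod_cast hr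
    have h4 : (4 : ℂ) * Real.pi * Complex.I * r = 0 := by linear_combination -hdet
    simp [Complex.I_ne_zero, hπ, hrC] at h4
  · have hPP : (!![0, 1; 1, 0] : Matrix (Fin 2) (Fin 2) ℂ) * !![0, 1; 1, 0] = 1 := by
      refine Matrix.ext fun i j => ?_
      fin_cases i <;> fin_cases j <;>
        simp [Matrix.mul_apply, Fin.sum_univ_two]
    refine ⟨⟨!![0,1;1,0], !![0,1;1,0], hPP, hPP⟩, ?_⟩
    have hScoe : ((⟨!![0,1;1,0], !![0,1;1,0], hPP, hPP⟩⁻¹ : GL (Fin 2) ℂ)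
        : Matrix (Fin 2) (Fin 2) ℂ) = !![0,1;1,0] := rfl
    rw [hScoe, hmap, hexp]
    have hinv : (Matrix.diagonal ![(Real.exp r : ℂ), (Real.exp (-r) : ℂ)])⁻¹
        = Matrix.diagonal ![(Real.exp (-r) : ℂ), (Real.exp r : ℂ)] := by
      apply Matrix.inv_eq_left_inv
      rw [Matrix.diagonal_mul_diagonal]
      refine Matrix.ext fun i j => ?_
      fin_cases i <;> fin_cases j <;>
        simp [Matrix.diagonal_apply, ← Complex.exp_add]
    rw [hinv]
    refine Matrix.ext fun i j => ?_
    fin_cases i <;> fin_cases j <;>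
      simp [Matrix.mul_apply, Fin.sum_univ_two, Matrix.diagonal_apply,
        Matrix.vecMul_diagonal, -Complex.ofReal_exp]
end
end

section
/- For every x ∈ ℂⁿ, the element (J(0,n), x) of the affine Lie algebra aff(n,ℂ) is strongly adjoint c-real; that is, there exists (B,w) ∈ Aff(n,ℂ) with B J(0,n) B⁻¹ = −J(0,n)‾, B B̄ = Iₙ, B x + x̄ = −J(0,n)‾ w, and B w̄ + w = 0. -/
open Matrix
noncomputable section

/-- The `n × n` nilpotent Jordan block `J(0, n)` (zero diagonal, ones on the
superdiagonal). -/
def J0 (n : ℕ) : Matrix (Fin n) (Fin n) ℂ :=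
  Matrix.of fun i j => if (i : ℕ) + 1 = (j : ℕ) then 1 else 0

/-- for every `x ∈ ℂⁿ`, `(J(0,n), x) ∈ aff(n, ℂ)` is strongly
adjoint c-real: there exists `(B, w)` with `B J(0,n) B⁻¹ = -J(0,n)‾`,
`B B̄ = I`, `B x + x̄ = -J(0,n)‾ w` and `B w̄ + w = 0`. -/
theorem jordanBlock_stronglyAdjointCReal {n : ℕ} (x : Fin n → ℂ) :
    ∃ (B : GL (Fin n) ℂ) (w : Fin n → ℂ),
      (B : Matrix (Fin n) (Fin n) ℂ) * J0 n
          * ((B⁻¹ : GL (Fin n) ℂ) : Matrix (Fin n) (Fin n) ℂ)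
        = -((J0 n).map (starRingEnd ℂ)) ∧
      B * Aff.glConj B = 1 ∧
      (B : Matrix (Fin n) (Fin n) ℂ) *ᵥ x + star x
        = -(((J0 n).map (starRingEnd ℂ)) *ᵥ w) ∧
      (B : Matrix (Fin n) (Fin n) ℂ) *ᵥ (star w) + w = 0 := by
  
  obtain _ | n := n
  · refine ⟨1, 0, Subsingleton.elim _ _, ?_, Subsingleton.elim _ _, Subsingleton.elim _ _⟩
    simp [Aff.glConj]
  · -- main case
    set u := x (Fin.last n) with hu
    set c : ℂ := if u = 0 then 1 else -(starRingEnd ℂ u)/u with hc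
    have hcc : c * starRingEnd ℂ c = 1 := by
      rw [hc]; split_ifs with h
      · simp
      · have h' : starRingEnd ℂ u ≠ 0 := by simpa using h
        simp only [map_neg, map_div₀, Complex.conj_conj]
        field_simp
    have hcu : c * u + starRingEnd ℂ u = 0 := by
      rw [hc]; split_ifs with h
      · simp [h]
      · field_simp
        ring
    have hcne : c ≠ 0 := by
      intro h; rw [h, zero_mul] at hcc; exact zero_ne_one hcc
    set d : Fin (n+1) → ℂ := fun i => (-1:ℂ)^(n - (i:ℕ)) * c with hd
    have hd1 : ∀ i, d i * starRingEnd ℂ (d i) = 1 := by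
      intro i
      have h1 : ((-1:ℂ)^(n-(i:ℕ)))*((-1:ℂ)^(n-(i:ℕ))) = 1 := by
        rw [← mul_pow]; norm_num
      calc d i * starRingEnd ℂ (d i)
          = (((-1:ℂ)^(n-(i:ℕ)))*((-1:ℂ)^(n-(i:ℕ)))) * (c * starRingEnd ℂ c) := by
            simp only [hd, _root_.map_mul, _root_.map_pow, map_neg, _root_.map_one]; ring
        _ = 1 := by rw [h1, hcc, mul_one]
    have hdsucc : ∀ i j : Fin (n+1), (i:ℕ)+1 = (j:ℕ) → d i = -d j := by
      intro i j hij
      have hn : n - (i:ℕ) = (n - (j:ℕ)) + 1 := by omega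
      simp only [hd, hn, pow_succ]; ring
    have hdne : ∀ i, d i ≠ 0 := fun i =>
      mul_ne_zero (pow_ne_zero _ (by norm_num)) hcne
    have hdlast : d (Fin.last n) = c := by simp [hd]
    set B : GL (Fin (n+1)) ℂ :=
      ⟨Matrix.diagonal d, Matrix.diagonal (fun i => starRingEnd ℂ (d i)),
        by rw [Matrix.diagonal_mul_diagonal,
            show (fun i => d i * starRingEnd ℂ (d i)) = fun _ => (1:ℂ) from funext hd1]
           exact Matrix.diagonal_one,
        by rw [Matrix.diagonal_mul_diagonal,
            show (fun i => starRingEnd ℂ (d i) * d i) = fun _ => (1:ℂ) from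
              funext (fun i => by rw [mul_comm]; exact hd1 i)]
           exact Matrix.diagonal_one⟩ with hB
    set w : Fin (n+1) → ℂ := fun j =>
      Fin.cases 0 (fun k => -(d k.castSucc * x k.castSucc + starRingEnd ℂ (x k.castSucc))) j
      with hw
    have hJmap : (J0 (n+1)).map (starRingEnd ℂ) = J0 (n+1) := by
      ext i j
      simp [J0, Matrix.map_apply, apply_ite]
    have hBval : (B : Matrix (Fin (n+1)) (Fin (n+1)) ℂ) = Matrix.diagonal d := rfl
    have hBinv : ((B⁻¹ : GL (Fin (n+1)) ℂ) : Matrix (Fin (n+1)) (Fin (n+1)) ℂ)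
        = Matrix.diagonal (fun i => starRingEnd ℂ (d i)) := rfl
    refine ⟨B, w, ?_, ?_, ?_, ?_⟩
    · rw [hJmap, hBval, hBinv]
      ext i j
      rw [Matrix.mul_diagonal, Matrix.diagonal_mul]
      simp only [J0, Matrix.of_apply, Matrix.neg_apply]
      split_ifs with h
      · rw [hdsucc i j h]
        linear_combination (-1 : ℂ) * hd1 j
      · ring
    · refine Units.ext ?_
      have : (Aff.glConj B : Matrix (Fin (n+1)) (Fin (n+1)) ℂ)
          = (Matrix.diagonal d).map (starRingEnd ℂ) := rfl
      rw [Units.val_mul, this, hBval, Matrix.diagonal_map (map_zero _),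
        Matrix.diagonal_mul_diagonal, Units.val_one,
        show (fun i => d i * starRingEnd ℂ (d i)) = fun _ => (1:ℂ) from funext hd1]
      exact Matrix.diagonal_one
    · rw [hJmap, hBval]
      funext i
      induction i using Fin.lastCases with
      | last =>
        have hsum : (J0 (n+1) *ᵥ w) (Fin.last n) = 0 := by
          simp only [Matrix.mulVec, dotProduct, J0, Matrix.of_apply]
          apply Finset.sum_eq_zero
          intro j _
          have hne : ¬ (n + 1 = (j:ℕ)) := by
            have := j.isLt; omega
          simp [Fin.val_last, hne]
        simp only [Pi.add_apply, Pi.neg_apply, hsum, neg_zero,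
          Matrix.mulVec_diagonal, Pi.star_apply]
        rw [hdlast]
        simpa using hcu
      | cast k =>
        have hsum : (J0 (n+1) *ᵥ w) k.castSucc = w k.succ := by
          simp only [Matrix.mulVec, dotProduct, J0, Matrix.of_apply]
          rw [Finset.sum_eq_single k.succ]
          · simp
          · intro j _ hj
            have hne : ¬ ((k : ℕ) + 1 = (j:ℕ)) := by
              intro hcontra
              apply hj
              apply Fin.ext
              simp only [Fin.val_succ, Fin.coe_castSucc] at *
              omega
            simp [hne]
          · simp
        simp only [Pi.add_apply, Pi.neg_apply, hsum, Matrix.mulVec_diagonal,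
          Pi.star_apply]
        rw [hw]
        simp only [Fin.cases_succ, starRingEnd_apply]
        ring
    · rw [hBval]
      funext i
      induction i using Fin.cases with
      | zero =>
        simp only [Pi.add_apply, Matrix.mulVec_diagonal, Pi.star_apply, Pi.zero_apply, hw]
        simp
      | succ k =>
        have hrel : d k.castSucc = -d k.succ := by
          apply hdsucc
          simp [Fin.val_succ]
        have hwk : w k.succ
            = -(d k.castSucc * x k.castSucc + starRingEnd ℂ (x k.castSucc)) := by
          rw [hw]; simp
        simp only [Pi.add_apply, Matrix.mulVec_diagonal, Pi.star_apply, Pi.zero_apply]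
        rw [hwk,
          show (star (-(d k.castSucc * x k.castSucc + starRingEnd ℂ (x k.castSucc))) : ℂ)
            = starRingEnd ℂ (-(d k.castSucc * x k.castSucc
                + starRingEnd ℂ (x k.castSucc))) from rfl,
          map_neg, map_add, _root_.map_mul, Complex.conj_conj]
        rw [hrel, map_neg]
        linear_combination (starRingEnd ℂ (x k.castSucc)) * hd1 k.succ
end
end

section
/- For every v ∈ ℂⁿ, the affine transformation g = (J(1,n), v) ∈ Aff(n,ℂ), whose linear part is the n×n Jordan block with eigenvalue 1, is strongly c-reversible; i.e., g is a product of two coninvolutions in Aff(n,ℂ). -/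
open Matrix
noncomputable section

namespace CRevAux
open Finset


lemma sq_neg_one_pow (b : ℕ) : ((-1:ℂ)^b) * ((-1:ℂ)^b) = 1 := by
  rw [← pow_add, ← two_mul, pow_mul]; norm_num

lemma neg_one_pow_sub_c {a b : ℕ} (h : b ≤ a) : (-1:ℂ)^(a-b) = (-1)^a * (-1)^b := by
  have h2 : (-1:ℂ)^(a-b) * (-1)^b = (-1)^a := by
    rw [← pow_add]; congr 1; omega
  calc (-1:ℂ)^(a-b) = (-1:ℂ)^(a-b) * ((-1)^b * (-1)^b) := by rw [sq_neg_one_pow, mul_one]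
    _ = (-1)^a * (-1)^b := by rw [← mul_assoc, h2]

lemma alt_sum_choose_c (m : ℕ) :
    ∑ k ∈ range (m+1), (-1:ℂ)^k * (m.choose k : ℂ) = if m = 0 then 1 else 0 := by
  have h := congrArg (fun z : ℤ => (z : ℂ)) (Int.alternating_sum_range_choose (n := m))
  push_cast at h
  simpa using h

/-- Binomial inversion sum. -/
lemma sum_inv (i j : ℕ) :
    ∑ k ∈ range (j+1), (-1:ℂ)^k * ((k.choose i : ℕ) : ℂ) * ((j.choose k : ℕ) : ℂ)
      = (-1)^i * (if i = j then 1 else 0) := by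
  rcases le_or_gt i j with hij | hij
  · rw [range_eq_Ico, ← Finset.sum_Ico_consecutive _ (Nat.zero_le i) (by omega : i ≤ j+1)]
    have h1 : ∑ k ∈ Ico 0 i, (-1:ℂ)^k * (k.choose i : ℂ) * (j.choose k : ℂ) = 0 := by
      apply Finset.sum_eq_zero
      intro k hk
      simp only [mem_Ico] at hk
      rw [Nat.choose_eq_zero_of_lt hk.2]
      simp
    rw [h1, zero_add, Finset.sum_Ico_eq_sum_range]
    have h2 : ∀ t ∈ range (j + 1 - i), (-1:ℂ)^(i+t) * ((i+t).choose i : ℂ) * (j.choose (i+t) : ℂ)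
        = ((-1)^i * (j.choose i : ℂ)) * ((-1:ℂ)^t * ((j-i).choose t : ℂ)) := by
      intro t ht
      simp only [mem_range] at ht
      have hc : j.choose (i+t) * (i+t).choose i = j.choose i * (j-i).choose t := by
        have := Nat.choose_mul (n := j) (k := i+t) (s := i) (by omega)
        simpa using this
      have hc' : ((i+t).choose i : ℂ) * (j.choose (i+t) : ℂ)
          = (j.choose i : ℂ) * ((j-i).choose t : ℂ) := by
        rw [mul_comm]; exact_mod_cast congrArg (fun m : ℕ => (m : ℂ)) hc
      rw [pow_add]
      calc (-1:ℂ)^i * (-1)^t * ((i+t).choose i : ℂ) * (j.choose (i+t) : ℂ)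
          = (-1:ℂ)^i * (-1)^t * (((i+t).choose i : ℂ) * (j.choose (i+t) : ℂ)) := by ring
        _ = (-1:ℂ)^i * (-1)^t * ((j.choose i : ℂ) * ((j-i).choose t : ℂ)) := by rw [hc']
        _ = _ := by ring
    rw [Finset.sum_congr rfl h2, ← Finset.mul_sum]
    have h3 : j + 1 - i = (j - i) + 1 := by omega
    rw [h3, alt_sum_choose_c]
    rcases eq_or_lt_of_le hij with he | hlt
    · simp [he]
    · rw [if_neg (by omega), if_neg (by omega)]
      ring
  · rw [if_neg (by omega)]
    rw [Finset.sum_eq_zero, mul_zero]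
    intro k hk
    simp only [mem_range] at hk
    rw [Nat.choose_eq_zero_of_lt (by omega : k < i)]
    simp

/-- Second combinatorial identity. -/
lemma sum_inv2 (i j : ℕ) :
    ∑ k ∈ range (j+1), (-1:ℂ)^k * ((k.choose i : ℕ) : ℂ) * (((j+1).choose (k+1) : ℕ) : ℂ)
      = if i ≤ j then (-1)^i else 0 := by
  induction j with
  | zero =>
    rcases Nat.eq_zero_or_pos i with h | h
    · subst h; simp
    · rw [Finset.sum_range_one, Nat.choose_eq_zero_of_lt h, if_neg (by omega)]
      simp
  | succ j ih =>
    have hsplit : ∀ k, (((j+2).choose (k+1) : ℕ) : ℂ)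
        = ((j+1).choose k : ℂ) + ((j+1).choose (k+1) : ℂ) := by
      intro k
      rw [← Nat.cast_add, Nat.choose_succ_succ (j+1) k]
    calc ∑ k ∈ range (j+2), (-1:ℂ)^k * (k.choose i : ℂ) * ((j+2).choose (k+1) : ℂ)
        = (∑ k ∈ range (j+2), (-1:ℂ)^k * (k.choose i : ℂ) * ((j+1).choose k : ℂ))
          + ∑ k ∈ range (j+2), (-1:ℂ)^k * (k.choose i : ℂ) * ((j+1).choose (k+1) : ℂ) := by
          rw [← Finset.sum_add_distrib]
          apply Finset.sum_congr rfl
          intro k _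
          rw [hsplit k]; ring
      _ = (-1:ℂ)^i * (if i = j+1 then 1 else 0)
          + ∑ k ∈ range (j+1), (-1:ℂ)^k * (k.choose i : ℂ) * ((j+1).choose (k+1) : ℂ) := by
          rw [sum_inv i (j+1), Finset.sum_range_succ]
          rw [Nat.choose_eq_zero_of_lt (by omega : j+1 < j+1+1)]
          simp
      _ = if i ≤ j + 1 then (-1:ℂ)^i else 0 := by
          rw [ih]
          rcases le_or_gt i j with h | h
          · rw [if_neg (by omega), if_pos h, if_pos (by omega)]; ring
          · rcases eq_or_lt_of_le (by omega : j + 1 ≤ i) with he | hlt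
            · rw [if_pos he.symm, if_neg (by omega), if_pos (by omega), ← he]; ring
            · rw [if_neg (by omega), if_neg (by omega), if_neg (by omega)]; ring


/-- The reversing involution for the Jordan block. -/
def sig (n : ℕ) : Matrix (Fin n) (Fin n) ℂ :=
  Matrix.of fun i j => (-1)^(n - 1 - (j:ℕ)) * (((j:ℕ).choose (i:ℕ) : ℕ) : ℂ)

/-- The inverse of the Jordan block `1 + J0 n`. -/
def Binv (n : ℕ) : Matrix (Fin n) (Fin n) ℂ :=
  Matrix.of fun i j => if (i:ℕ) ≤ (j:ℕ) then (-1)^((j:ℕ)-(i:ℕ)) else 0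

lemma sig_mul_sig (n : ℕ) : sig n * sig n = 1 := by
  ext i j
  rw [mul_apply, one_apply]
  have hstep : ∀ k : Fin n, sig n i k * sig n k j
      = ((-1:ℂ)^(n-1) * (-1)^(n-1-(j:ℕ)))
        * ((-1)^(k:ℕ) * (((k:ℕ).choose (i:ℕ) : ℕ) : ℂ) * (((j:ℕ).choose (k:ℕ) : ℕ) : ℂ)) := by
    intro k
    simp only [sig, of_apply]
    rw [neg_one_pow_sub_c (show (k:ℕ) ≤ n-1 by have := k.isLt; omega)]
    ring
  rw [Finset.sum_congr rfl (fun k _ => hstep k), ← Finset.mul_sum]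
  rw [Fin.sum_univ_eq_sum_range
    (fun k => (-1:ℂ)^k * ((Nat.choose k (i:ℕ) : ℕ) : ℂ) * ((Nat.choose (j:ℕ) k : ℕ) : ℂ))]
  have hsub : ∑ k ∈ range n, (-1:ℂ)^k * ((Nat.choose k (i:ℕ) : ℕ) : ℂ) * ((Nat.choose (j:ℕ) k : ℕ) : ℂ)
      = ∑ k ∈ range ((j:ℕ)+1), (-1:ℂ)^k * ((Nat.choose k (i:ℕ) : ℕ) : ℂ) * ((Nat.choose (j:ℕ) k : ℕ) : ℂ) := by
    refine (Finset.sum_subset (Finset.range_subset_range.2 (by have := j.isLt; omega)) ?_).symm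
    intro k hk hk'
    simp only [mem_range] at hk'
    rw [Nat.choose_eq_zero_of_lt (show (j:ℕ) < k by omega)]
    simp
  rw [hsub, sum_inv (i:ℕ) (j:ℕ)]
  by_cases h : i = j
  · subst h
    rw [if_pos rfl, if_pos rfl, mul_one]
    rw [neg_one_pow_sub_c (show (i:ℕ) ≤ n-1 by have := i.isLt; omega)]
    calc (-1:ℂ)^(n-1) * ((-1)^(n-1) * (-1)^(i:ℕ)) * (-1)^(i:ℕ)
        = ((-1:ℂ)^(n-1) * (-1)^(n-1)) * ((-1)^(i:ℕ) * (-1)^(i:ℕ)) := by ring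
      _ = 1 := by rw [sq_neg_one_pow, sq_neg_one_pow, mul_one]
  · rw [if_neg h, if_neg (fun hc => h (Fin.ext hc))]
    ring

lemma A_mul_sig (n : ℕ) : (1 + J0 n) * sig n
    = Matrix.of (fun k j : Fin n =>
        (-1:ℂ)^(n-1-(j:ℕ)) * (((((j:ℕ)+1).choose ((k:ℕ)+1) : ℕ) : ℂ))) := by
  ext k j
  rw [add_mul, one_mul, Matrix.add_apply, of_apply]
  have hj0 : (J0 n * sig n) k j
      = if (k:ℕ)+1 < n
          then (-1:ℂ)^(n-1-(j:ℕ)) * (((j:ℕ).choose ((k:ℕ)+1) : ℕ) : ℂ) else 0 := by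
    by_cases h : (k:ℕ)+1 < n
    · rw [if_pos h, mul_apply,
        Finset.sum_eq_single (⟨(k:ℕ)+1, h⟩ : Fin n)
          (fun l _ hl => by
            have : ¬ ((k:ℕ)+1 = (l:ℕ)) :=
              fun hc => hl (Fin.ext (show (l:ℕ) = (k:ℕ)+1 by omega))
            simp [J0, this])
          (fun habs => absurd (Finset.mem_univ _) habs)]
      have hval : ((⟨(k:ℕ)+1, h⟩ : Fin n) : ℕ) = (k:ℕ)+1 := rfl
      simp [J0, sig, hval]
    · rw [if_neg h, mul_apply]
      apply Finset.sum_eq_zero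
      intro l _
      have : ¬ ((k:ℕ)+1 = (l:ℕ)) := by have := l.isLt; omega
      simp [J0, this]
  rw [hj0]
  by_cases h : (k:ℕ)+1 < n
  · rw [if_pos h]
    simp only [sig, of_apply]
    rw [Nat.choose_succ_succ' (j:ℕ) (k:ℕ)]
    push_cast
    ring
  · rw [if_neg h]
    simp only [sig, of_apply]
    rw [Nat.choose_succ_succ' (j:ℕ) (k:ℕ)]
    rw [Nat.choose_eq_zero_of_lt (show (j:ℕ) < (k:ℕ)+1 by have := j.isLt; omega)]
    push_cast
    ring

lemma sig_A_sig (n : ℕ) : sig n * ((1 + J0 n) * sig n) = Binv n := by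
  rw [A_mul_sig]
  ext i j
  rw [mul_apply]
  have hstep : ∀ k : Fin n, sig n i k
        * Matrix.of (fun k j : Fin n =>
            (-1:ℂ)^(n-1-(j:ℕ)) * (((((j:ℕ)+1).choose ((k:ℕ)+1) : ℕ) : ℂ))) k j
      = ((-1:ℂ)^(n-1) * (-1)^(n-1-(j:ℕ)))
        * ((-1)^(k:ℕ) * (((k:ℕ).choose (i:ℕ) : ℕ) : ℂ)
            * (((((j:ℕ)+1).choose ((k:ℕ)+1) : ℕ) : ℂ))) := by
    intro k
    simp only [sig, of_apply]
    rw [neg_one_pow_sub_c (show (k:ℕ) ≤ n-1 by have := k.isLt; omega)]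
    ring
  rw [Finset.sum_congr rfl (fun k _ => hstep k), ← Finset.mul_sum]
  rw [Fin.sum_univ_eq_sum_range
    (fun k => (-1:ℂ)^k * ((Nat.choose k (i:ℕ) : ℕ) : ℂ)
      * ((Nat.choose ((j:ℕ)+1) (k+1) : ℕ) : ℂ))]
  have hsub : ∑ k ∈ range n, (-1:ℂ)^k * ((Nat.choose k (i:ℕ) : ℕ) : ℂ)
        * ((Nat.choose ((j:ℕ)+1) (k+1) : ℕ) : ℂ)
      = ∑ k ∈ range ((j:ℕ)+1), (-1:ℂ)^k * ((Nat.choose k (i:ℕ) : ℕ) : ℂ)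
        * ((Nat.choose ((j:ℕ)+1) (k+1) : ℕ) : ℂ) := by
    refine (Finset.sum_subset (Finset.range_subset_range.2 (by have := j.isLt; omega)) ?_).symm
    intro k hk hk'
    simp only [mem_range] at hk'
    rw [Nat.choose_eq_zero_of_lt (show (j:ℕ)+1 < k+1 by omega)]
    simp
  rw [hsub, sum_inv2 (i:ℕ) (j:ℕ)]
  simp only [Binv, of_apply]
  by_cases h : (i:ℕ) ≤ (j:ℕ)
  · rw [if_pos h, if_pos h]
    rw [neg_one_pow_sub_c (show (j:ℕ) ≤ n-1 by have := j.isLt; omega),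
        neg_one_pow_sub_c h]
    calc (-1:ℂ)^(n-1) * ((-1)^(n-1) * (-1)^(j:ℕ)) * (-1)^(i:ℕ)
        = ((-1:ℂ)^(n-1) * (-1)^(n-1)) * ((-1)^(j:ℕ) * (-1)^(i:ℕ)) := by ring
      _ = (-1)^(j:ℕ) * (-1)^(i:ℕ) := by rw [sq_neg_one_pow, one_mul]
  · rw [if_neg h, if_neg h, mul_zero]

lemma Binv_mul_A (n : ℕ) : Binv n * (1 + J0 n) = 1 := by
  ext i j
  rw [mul_add, mul_one, Matrix.add_apply]
  have hj0 : (Binv n * J0 n) i j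
      = if 1 ≤ (j:ℕ) ∧ (i:ℕ) ≤ (j:ℕ)-1 then (-1:ℂ)^((j:ℕ)-1-(i:ℕ)) else 0 := by
    rw [mul_apply]
    by_cases h : 1 ≤ (j:ℕ)
    · have hlt : (j:ℕ)-1 < n := by have := j.isLt; omega
      rw [Finset.sum_eq_single (⟨(j:ℕ)-1, hlt⟩ : Fin n)
          (fun l _ hl => by
            have : ¬ ((l:ℕ)+1 = (j:ℕ)) :=
              fun hc => hl (Fin.ext (show (l:ℕ) = (j:ℕ)-1 by omega))
            simp [J0, this])
          (fun habs => absurd (Finset.mem_univ _) habs)]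
      have hval : ((⟨(j:ℕ)-1, hlt⟩ : Fin n) : ℕ) = (j:ℕ)-1 := rfl
      simp only [Binv, J0, of_apply, hval]
      rw [if_pos (show (j:ℕ)-1+1 = (j:ℕ) by omega), mul_one]
      by_cases h2 : (i:ℕ) ≤ (j:ℕ)-1
      · rw [if_pos h2, if_pos ⟨h, h2⟩]
      · rw [if_neg h2, if_neg (fun hc => h2 hc.2)]
    · rw [if_neg (fun hc => h hc.1)]
      apply Finset.sum_eq_zero
      intro l _
      have : ¬ ((l:ℕ)+1 = (j:ℕ)) := by omega
      simp [J0, this]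
  rw [hj0, one_apply]
  simp only [Binv, of_apply]
  rcases Nat.eq_zero_or_pos (j:ℕ) with h0 | h0
  · rw [if_neg (show ¬(1 ≤ (j:ℕ) ∧ (i:ℕ) ≤ (j:ℕ)-1) by omega), add_zero]
    by_cases h : i = j
    · subst h
      rw [if_pos (show (i:ℕ) ≤ (i:ℕ) from le_refl _), if_pos rfl, Nat.sub_self, pow_zero]
    · rw [if_neg (show ¬((i:ℕ) ≤ (j:ℕ)) from fun hc => h (Fin.ext (by omega))), if_neg h]
  · rcases lt_trichotomy (i:ℕ) (j:ℕ) with hlt | heq | hgt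
    · rw [if_pos (show (i:ℕ) ≤ (j:ℕ) by omega),
        if_pos (show 1 ≤ (j:ℕ) ∧ (i:ℕ) ≤ (j:ℕ)-1 by omega),
        if_neg (show ¬(i = j) from fun hc => by rw [hc] at hlt; exact lt_irrefl _ hlt)]
      have h1 : (j:ℕ) - (i:ℕ) = ((j:ℕ) - 1 - (i:ℕ)) + 1 := by omega
      rw [h1, pow_succ]
      ring
    · rw [if_pos (show (i:ℕ) ≤ (j:ℕ) by omega),
        if_neg (show ¬(1 ≤ (j:ℕ) ∧ (i:ℕ) ≤ (j:ℕ)-1) by omega),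
        if_pos (Fin.ext heq)]
      rw [show (j:ℕ) - (i:ℕ) = 0 by omega, pow_zero, add_zero]
    · rw [if_neg (show ¬((i:ℕ) ≤ (j:ℕ)) by omega),
        if_neg (show ¬(1 ≤ (j:ℕ) ∧ (i:ℕ) ≤ (j:ℕ)-1) by omega),
        if_neg (show ¬(i = j) from fun hc => by rw [hc] at hgt; exact lt_irrefl _ hgt)]
      rw [add_zero]


lemma sig_entry_real (n : ℕ) (i j : Fin n) :
    starRingEnd ℂ (sig n i j) = sig n i j := by
  simp [sig]

lemma A_mul_Binv (n : ℕ) : (1 + J0 n) * Binv n = 1 :=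
  mul_eq_one_comm.mp (Binv_mul_A n)

lemma A_mul_sig_eq (n : ℕ) : (1 + J0 n) * sig n = sig n * Binv n := by
  have h := congrArg (fun M => sig n * M) (sig_A_sig n)
  simp only [← mul_assoc, sig_mul_sig n, one_mul] at h
  exact h

lemma J0_mul_sig (n : ℕ) : J0 n * sig n = sig n * Binv n - sig n := by
  rw [← A_mul_sig_eq, add_mul, one_mul, add_sub_cancel_left]

lemma sig_mul_Binv (n : ℕ) : sig n * Binv n = (1 + J0 n) * sig n :=
  (A_mul_sig_eq n).symm

lemma sig_mul_A (n : ℕ) : sig n * (1 + J0 n) = Binv n * sig n := by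
  have h := congrArg (fun M => M * sig n) (sig_A_sig n)
  simp only [mul_assoc, sig_mul_sig n, mul_one] at h
  exact h

/-- star commutes with mulVec for real matrices. -/
lemma star_mulVec_real {n : ℕ} {M : Matrix (Fin n) (Fin n) ℂ}
    (hM : ∀ i j, starRingEnd ℂ (M i j) = M i j) (x : Fin n → ℂ) :
    star (M *ᵥ x) = M *ᵥ star x := by
  funext i
  show starRingEnd ℂ ((M *ᵥ x) i) = (M *ᵥ star x) i
  simp only [Matrix.mulVec, dotProduct, map_sum, _root_.map_mul, hM]
  simp only [Pi.star_apply, starRingEnd_apply]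

lemma sig_real_mulVec {n : ℕ} (x : Fin n → ℂ) :
    star (sig n *ᵥ x) = sig n *ᵥ star x :=
  star_mulVec_real (sig_entry_real n) x

lemma A_entry_real (n : ℕ) (i j : Fin n) :
    starRingEnd ℂ ((1 + J0 n) i j) = (1 + J0 n) i j := by
  simp only [Matrix.add_apply, Matrix.one_apply, J0, Matrix.of_apply, map_add, apply_ite]
  simp

lemma A_real_mulVec {n : ℕ} (x : Fin n → ℂ) :
    star ((1 + J0 n) *ᵥ x) = (1 + J0 n) *ᵥ star x :=
  star_mulVec_real (A_entry_real n) x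

lemma star_mulVec_conj {n : ℕ} (M : Matrix (Fin n) (Fin n) ℂ) (x : Fin n → ℂ) :
    star (M *ᵥ x) = (M.map (starRingEnd ℂ)) *ᵥ star x := by
  funext i
  show starRingEnd ℂ ((M *ᵥ x) i) = _
  simp only [Matrix.mulVec, dotProduct, map_sum, _root_.map_mul, Matrix.map_apply]
  simp only [Pi.star_apply, starRingEnd_apply]


end CRevAux

namespace Aff

open CRevAux

variable {n : ℕ}

@[simp] lemma bar_A (g : Aff n) : (bar g).A = glConj g.A := rfl
@[simp] lemma bar_v (g : Aff n) : (bar g).v = star g.v := rfl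

lemma coe_glConj (u : GL (Fin n) ℂ) :
    (↑(glConj u) : Matrix (Fin n) (Fin n) ℂ)
      = (↑u : Matrix (Fin n) (Fin n) ℂ).map (starRingEnd ℂ) := by
  rfl

lemma bar_mul (x y : Aff n) : bar (x * y) = bar x * bar y := by
  ext : 1
  · exact map_mul glConj x.A y.A
  · show star ((↑x.A : Matrix (Fin n) (Fin n) ℂ) *ᵥ y.v + x.v) = _
    rw [star_add, star_mulVec_conj]
    rfl

lemma bar_one : bar (1 : Aff n) = 1 := by
  ext : 1
  · exact map_one glConj
  · show star (0 : Fin n → ℂ) = 0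
    simp

lemma bar_inv (x : Aff n) : bar x⁻¹ = (bar x)⁻¹ := by
  apply eq_inv_of_mul_eq_one_left
  rw [← bar_mul, inv_mul_cancel, bar_one]

end Aff

/-- for every `v ∈ ℂⁿ`, the affine transformation `(J(1,n), v)`,
whose linear part is the Jordan block with eigenvalue `1`, is strongly
c-reversible, i.e. a product of two coninvolutions in `Aff(n, ℂ)`. -/
theorem jordanBlockOne_stronglyCReversible {n : ℕ} (A : GL (Fin n) ℂ)
    (hA : (A : Matrix (Fin n) (Fin n) ℂ) = 1 + J0 n) (v : Fin n → ℂ) :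
    Aff.IsStronglyCReversible ⟨A, v⟩ ∧
      ∃ a b : Aff n, Aff.IsConinvolution a ∧ Aff.IsConinvolution b ∧
        (⟨A, v⟩ : Aff n) = a * b := by
  classical
  set σ : Matrix (Fin n) (Fin n) ℂ := CRevAux.sig n with hσ
  set B : Matrix (Fin n) (Fin n) ℂ := CRevAux.Binv n with hB
  set Am : Matrix (Fin n) (Fin n) ℂ := 1 + J0 n with hAm
  have f0 : ∀ x : Fin n → ℂ, σ *ᵥ (σ *ᵥ x) = x := fun x => by
    rw [Matrix.mulVec_mulVec, hσ, CRevAux.sig_mul_sig, Matrix.one_mulVec]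
  have f1 : ∀ x : Fin n → ℂ, B *ᵥ (Am *ᵥ x) = x := fun x => by
    rw [Matrix.mulVec_mulVec, hB, hAm, CRevAux.Binv_mul_A, Matrix.one_mulVec]
  have f2 : ∀ x : Fin n → ℂ, Am *ᵥ (B *ᵥ x) = x := fun x => by
    rw [Matrix.mulVec_mulVec, hB, hAm, CRevAux.A_mul_Binv, Matrix.one_mulVec]
  have f3 : ∀ x : Fin n → ℂ, star (σ *ᵥ x) = σ *ᵥ star x := CRevAux.sig_real_mulVec
  have f4 : ∀ x : Fin n → ℂ, star (Am *ᵥ x) = Am *ᵥ star x := CRevAux.A_real_mulVec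
  have fσB : ∀ x : Fin n → ℂ, σ *ᵥ (B *ᵥ x) = Am *ᵥ (σ *ᵥ x) := fun x => by
    rw [Matrix.mulVec_mulVec, Matrix.mulVec_mulVec, hσ, hB, hAm, CRevAux.sig_mul_Binv]
  -- the scalar λ
  set lastc : ℂ := ∑ i : Fin n, if (i:ℕ)+1 = n then v i else 0 with hlastc
  have hlast_eq : ∀ i : Fin n, (i:ℕ)+1 = n → v i = lastc := by
    intro i hi
    rw [hlastc, Finset.sum_eq_single i
      (fun j _ hj => by
        rw [if_neg]
        intro hc
        exact hj (Fin.ext (by omega)))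
      (fun h => absurd (Finset.mem_univ _) h)]
    rw [if_pos hi]
  set l : ℂ := if lastc = 0 then -1 else -(starRingEnd ℂ lastc)/lastc with hl
  have hl1 : l * starRingEnd ℂ l = 1 := by
    rw [hl]
    by_cases hz : lastc = 0
    · rw [if_pos hz]; simp
    · rw [if_neg hz]
      have hz' : starRingEnd ℂ lastc ≠ 0 := by simpa using hz
      simp only [map_div₀, map_neg, Complex.conj_conj]
      field_simp
  have hl1' : starRingEnd ℂ l * l = 1 := by rw [mul_comm]; exact hl1
  have hl2 : l * lastc = -(starRingEnd ℂ lastc) := by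
    rw [hl]
    by_cases hz : lastc = 0
    · rw [if_pos hz, hz]; simp
    · rw [if_neg hz]; field_simp
  -- matrix part of the reverser
  have hHlr : (l • σ) * (starRingEnd ℂ l • σ) = 1 := by
    rw [Matrix.smul_mul, Matrix.mul_smul, smul_smul, hl1, one_smul, hσ,
      CRevAux.sig_mul_sig]
  have hHrl : (starRingEnd ℂ l • σ) * (l • σ) = 1 := by
    rw [Matrix.smul_mul, Matrix.mul_smul, smul_smul, hl1', one_smul, hσ,
      CRevAux.sig_mul_sig]
  set H : GL (Fin n) ℂ := ⟨l • σ, starRingEnd ℂ l • σ, hHlr, hHrl⟩ with hH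
  have hHcoe : (↑H : Matrix (Fin n) (Fin n) ℂ) = l • σ := rfl
  have hHinvcoe : (↑(H⁻¹) : Matrix (Fin n) (Fin n) ℂ) = starRingEnd ℂ l • σ := rfl
  have hAinv : (↑(A⁻¹) : Matrix (Fin n) (Fin n) ℂ) = B := by
    rw [Matrix.coe_units_inv, hA, hB, Matrix.inv_eq_left_inv (CRevAux.Binv_mul_A n)]
  have hAreal : Aff.glConj A = A := by
    apply Units.ext
    rw [Aff.coe_glConj, hA]
    ext i j
    rw [Matrix.map_apply]
    exact CRevAux.A_entry_real n i j
  -- the translation part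
  set u : Fin n → ℂ := -(l • (Am *ᵥ (σ *ᵥ v)) + star v) with hu
  have hu_last : ∀ i : Fin n, (i:ℕ)+1 = n → u i = 0 := by
    intro i hi
    have hNv : ∀ y : Fin n → ℂ, (J0 n *ᵥ y) i = 0 := by
      intro y
      show ∑ j, J0 n i j * y j = 0
      apply Finset.sum_eq_zero
      intro j _
      have : ¬ ((i:ℕ)+1 = (j:ℕ)) := by have := j.isLt; omega
      simp [J0, this]
    have hσv : (σ *ᵥ v) i = v i := by
      rw [hσ]
      show ∑ j, CRevAux.sig n i j * v j = v i
      rw [Finset.sum_eq_single i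
        (fun j _ hj => by
          have hj' : (j:ℕ) < (i:ℕ) := by
            have h1 := j.isLt
            have h2 : (j:ℕ) ≠ (i:ℕ) := fun hc => hj (Fin.ext hc)
            omega
          simp [CRevAux.sig, Nat.choose_eq_zero_of_lt hj'])
        (fun h => absurd (Finset.mem_univ _) h)]
      simp [CRevAux.sig, Nat.choose_self, show n - 1 - (i:ℕ) = 0 by omega]
    have hAmv : (Am *ᵥ (σ *ᵥ v)) i = (σ *ᵥ v) i := by
      rw [hAm, Matrix.add_mulVec, Matrix.one_mulVec]
      show (σ *ᵥ v) i + (J0 n *ᵥ (σ *ᵥ v)) i = _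
      rw [hNv]; ring
    have hui : u i = -(l * v i + starRingEnd ℂ (v i)) := by
      rw [hu]
      show -(l * (Am *ᵥ (σ *ᵥ v)) i + starRingEnd ℂ (v i)) = _
      rw [hAmv, hσv]
    rw [hui, hlast_eq i hi, hl2]
    ring
  set w0 : Fin n → ℂ := fun i =>
    if h : 0 < (i:ℕ) then u ⟨(i:ℕ)-1, by have := i.isLt; omega⟩ else 0 with hw0def
  have hw0 : J0 n *ᵥ w0 = u := by
    funext i
    by_cases h : (i:ℕ)+1 < n
    · show ∑ j, J0 n i j * w0 j = u i
      rw [Finset.sum_eq_single (⟨(i:ℕ)+1, h⟩ : Fin n)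
        (fun j _ hj => by
          have : ¬ ((i:ℕ)+1 = (j:ℕ)) :=
            fun hc => hj (Fin.ext (show (j:ℕ) = (i:ℕ)+1 by omega))
          simp [J0, this])
        (fun hh => absurd (Finset.mem_univ _) hh)]
      have h1 : J0 n i ⟨(i:ℕ)+1, h⟩ = 1 := by simp [J0]
      have h2 : w0 ⟨(i:ℕ)+1, h⟩ = u i := by
        rw [hw0def]
        show (if h' : 0 < (i:ℕ)+1 then u ⟨(i:ℕ)+1-1, _⟩ else 0) = u i
        rw [dif_pos (Nat.succ_pos _)]
        exact congrArg u (Fin.ext (by simp))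
      rw [h1, h2, one_mul]
    · have hi : (i:ℕ)+1 = n := by have := i.isLt; omega
      show ∑ j, J0 n i j * w0 j = u i
      rw [hu_last i hi]
      apply Finset.sum_eq_zero
      intro j _
      have : ¬ ((i:ℕ)+1 = (j:ℕ)) := by have := j.isLt; omega
      simp [J0, this]
  set w : Fin n → ℂ := (2:ℂ)⁻¹ • (w0 - l • (σ *ᵥ star w0)) with hwdef
  have hstaru : star u = -(starRingEnd ℂ l • (Am *ᵥ (σ *ᵥ star v)) + v) := by
    rw [hu, star_neg, star_add, star_smul, f4, f3, star_star]
    rfl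
  have hAw0 : Am *ᵥ w0 = w0 + u := by
    rw [hAm, Matrix.add_mulVec, Matrix.one_mulVec, hw0]
  have hstarw0 : Am *ᵥ star w0 = star w0 + star u := by
    rw [← f4, hAw0, star_add]
  have hBstarw0 : B *ᵥ star w0 = star w0 - B *ᵥ star u := by
    have h := f1 (star w0)
    rw [hstarw0, Matrix.mulVec_add] at h
    rw [eq_sub_iff_add_eq, h]
  have hBstaru : B *ᵥ star u = -(starRingEnd ℂ l • (σ *ᵥ star v) + B *ᵥ v) := by
    rw [hstaru, Matrix.mulVec_neg, Matrix.mulVec_add, Matrix.mulVec_smul, f1]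
  have hNTw0 : J0 n *ᵥ (l • (σ *ᵥ star w0)) = -u := by
    have hNw0' : J0 n *ᵥ (σ *ᵥ star w0)
        = σ *ᵥ (B *ᵥ star w0) - σ *ᵥ star w0 := by
      rw [Matrix.mulVec_mulVec, CRevAux.J0_mul_sig, Matrix.sub_mulVec,
        ← Matrix.mulVec_mulVec]
    rw [Matrix.mulVec_smul, hNw0', hBstarw0]
    have hexp : σ *ᵥ (star w0 - B *ᵥ star u) - σ *ᵥ star w0
        = -(σ *ᵥ (B *ᵥ star u)) := by
      rw [Matrix.mulVec_sub]
      abel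
    rw [hexp, hBstaru]
    rw [Matrix.mulVec_neg, Matrix.mulVec_add, Matrix.mulVec_smul, f0, fσB, neg_neg]
    rw [hu, neg_neg]
    rw [smul_add, smul_smul, hl1, one_smul, add_comm]
  have hNw : J0 n *ᵥ w = u := by
    rw [hwdef, Matrix.mulVec_smul, Matrix.mulVec_sub, hw0, hNTw0, sub_neg_eq_add]
    funext i
    show (2:ℂ)⁻¹ * (u i + u i) = u i
    ring
  have hTw : l • (σ *ᵥ star w) = -w := by
    have hsw : star w = (2:ℂ)⁻¹ • (star w0 - starRingEnd ℂ l • (σ *ᵥ w0)) := by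
      rw [hwdef, star_smul, star_sub, star_smul, f3, star_star]
      congr 1
      simp
    rw [hsw, Matrix.mulVec_smul, Matrix.mulVec_sub, Matrix.mulVec_smul, f0, hwdef]
    funext i
    show l * ((2:ℂ)⁻¹ * ((σ *ᵥ star w0) i - starRingEnd ℂ l * w0 i))
        = -((2:ℂ)⁻¹ * (w0 i - l * (σ *ᵥ star w0) i))
    linear_combination (-(2:ℂ)⁻¹ * w0 i) * hl1
  -- the reverser as an affine map
  have hconv : Aff.IsConinvolution (⟨H, w⟩ : Aff n) := by
    show (⟨H, w⟩ : Aff n) * Aff.bar ⟨H, w⟩ = 1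
    have hmap : ((l • σ).map (starRingEnd ℂ)) = starRingEnd ℂ l • σ := by
      ext i j
      show starRingEnd ℂ (l * σ i j) = starRingEnd ℂ l * σ i j
      rw [_root_.map_mul, hσ, CRevAux.sig_entry_real]
    ext : 1
    · show H * Aff.glConj H = 1
      apply Units.ext
      show (↑H : Matrix (Fin n) (Fin n) ℂ) * (↑(Aff.glConj H) : Matrix (Fin n) (Fin n) ℂ) = ↑(1 : GL (Fin n) ℂ)
      rw [Aff.coe_glConj, hHcoe, hmap, hHlr]
      rfl
    · show (↑H : Matrix (Fin n) (Fin n) ℂ) *ᵥ star w + w = 0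
      rw [hHcoe, Matrix.smul_mulVec, hTw]
      simp
  have hHA : H * A * H⁻¹ = A⁻¹ := by
    have heq : H * A = A⁻¹ * H := by
      apply Units.ext
      show (↑(H * A) : Matrix (Fin n) (Fin n) ℂ) = ↑(A⁻¹ * H)
      rw [Units.val_mul, Units.val_mul, hHcoe, hAinv, hA]
      rw [Matrix.smul_mul, Matrix.mul_smul]
      congr 1
      rw [hσ, hB, hAm]
      exact CRevAux.sig_mul_A n
    rw [heq, mul_inv_cancel_right]
  have hAinvmat : ((↑A : Matrix (Fin n) (Fin n) ℂ))⁻¹ = B := by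
    rw [hA, hB, hAm]
    exact Matrix.inv_eq_left_inv (CRevAux.Binv_mul_A n)
  have hHinvmat : ((↑H : Matrix (Fin n) (Fin n) ℂ))⁻¹ = starRingEnd ℂ l • σ := by
    rw [← Matrix.coe_units_inv]
    rfl
  have hrev : (⟨H, w⟩ : Aff n) * ⟨A, v⟩ * (⟨H, w⟩ : Aff n)⁻¹ = (Aff.bar ⟨A, v⟩)⁻¹ := by
    ext : 1
    · simp only [Aff.mul_A, Aff.inv_A, Aff.bar_A]
      rw [hAreal]
      exact hHA
    · simp only [Aff.mul_v, Aff.mul_A, Aff.inv_v, Aff.inv_A, Aff.bar_A, Aff.bar_v]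
      rw [hAreal, hAinvmat, hHinvmat]
      have hmatB : ((l • σ) * Am) * σ = l • B := by
        rw [Matrix.smul_mul, Matrix.smul_mul, hσ, hAm, hB]
        congr 1
        rw [mul_assoc]
        exact CRevAux.sig_A_sig n
      have hterm1 : ((↑(H * A) : Matrix (Fin n) (Fin n) ℂ)) *ᵥ (-((starRingEnd ℂ l • σ) *ᵥ w))
          = -(B *ᵥ w) := by
        rw [Matrix.mulVec_neg, Units.val_mul, hHcoe, hA]
        rw [Matrix.smul_mulVec (starRingEnd ℂ l) σ w, Matrix.mulVec_smul, Matrix.mulVec_mulVec, hmatB,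
          Matrix.smul_mulVec, smul_smul, hl1', one_smul]
      rw [hterm1, Matrix.smul_mulVec]
      have hAmw : Am *ᵥ w = w + u := by
        rw [hAm, Matrix.add_mulVec, Matrix.one_mulVec, hNw]
      have hwB : w = B *ᵥ w + B *ᵥ u := by
        have h := f1 w
        rw [hAmw, Matrix.mulVec_add] at h
        exact h.symm
      have hBu : B *ᵥ u = -(l • (σ *ᵥ v) + B *ᵥ star v) := by
        rw [hu, Matrix.mulVec_neg, Matrix.mulVec_add, Matrix.mulVec_smul, f1]
      calc -(B *ᵥ w) + (l • (σ *ᵥ v) + w)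
          = -(B *ᵥ w) + (l • (σ *ᵥ v) + (B *ᵥ w + B *ᵥ u)) := by rw [← hwB]
        _ = l • (σ *ᵥ v) + B *ᵥ u := by abel
        _ = -(B *ᵥ star v) := by rw [hBu]; abel
  have hbh : Aff.bar ⟨H, w⟩ = (⟨H, w⟩ : Aff n)⁻¹ := eq_inv_of_mul_eq_one_right hconv
  refine ⟨⟨⟨H, w⟩, hconv, hrev⟩, (⟨H, w⟩ : Aff n)⁻¹, (⟨H, w⟩ : Aff n) * ⟨A, v⟩, ?_, ?_, ?_⟩
  · show (⟨H, w⟩ : Aff n)⁻¹ * Aff.bar ((⟨H, w⟩ : Aff n)⁻¹) = 1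
    rw [Aff.bar_inv, hbh, inv_inv, inv_mul_cancel]
  · show (⟨H, w⟩ : Aff n) * ⟨A, v⟩ * Aff.bar ((⟨H, w⟩ : Aff n) * ⟨A, v⟩) = 1
    rw [Aff.bar_mul, hbh]
    calc (⟨H, w⟩ : Aff n) * ⟨A, v⟩ * ((⟨H, w⟩ : Aff n)⁻¹ * Aff.bar ⟨A, v⟩)
        = ((⟨H, w⟩ : Aff n) * ⟨A, v⟩ * (⟨H, w⟩ : Aff n)⁻¹) * Aff.bar ⟨A, v⟩ := by
          simp only [mul_assoc]
      _ = (Aff.bar ⟨A, v⟩)⁻¹ * Aff.bar ⟨A, v⟩ := by rw [hrev]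
      _ = 1 := inv_mul_cancel _
  · rw [inv_mul_cancel_left]
end
end

section
/- Let g = (A,v) ∈ Aff(n,ℂ) and suppose B A B⁻¹ = Ā⁻¹ where A = T ⊕ U is block-diagonal with T ∈ GL(n−m,ℂ) having no eigenvalue 1 and U ∈ GL(m,ℂ) having 1 as only eigenvalue. Then any such B is necessarily block-diagonal, B = B₁ ⊕ B₄, and B₁ T B₁⁻¹ = T̄⁻¹; in particular T is c-reversible in GL(n−m,ℂ). -/
open Matrix
noncomputable section

open Polynomial in
/-- Over `ℂ`, a matrix whose spectrum is contained in `{1}` is unipotent. -/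
lemma aux_nilpotent_of_spectrum {m : ℕ} (M : Matrix (Fin m) (Fin m) ℂ)
    (h : spectrum ℂ M ⊆ {1}) : IsNilpotent (M - 1) := by
  let e := Matrix.toLinAlgEquiv (Pi.basisFun ℂ (Fin m))
  have hspec : spectrum ℂ (e M) = spectrum ℂ M := AlgEquiv.spectrum_eq e M
  set f := e M with hf
  have hint : IsIntegral ℂ f := Algebra.IsIntegral.isIntegral f
  have hmon : (minpoly ℂ f).Monic := minpoly.monic hint
  have hsplit : (minpoly ℂ f).Splits := IsAlgClosed.splits _
  have hroots : ∀ x ∈ (minpoly ℂ f).roots, x = 1 := by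
    intro x hx
    have hr : (minpoly ℂ f).IsRoot x := isRoot_of_mem_roots hx
    have h1 : Module.End.HasEigenvalue f x := Module.End.hasEigenvalue_iff_isRoot.mpr hr
    have h2 := h1.mem_spectrum
    rw [hspec] at h2
    exact h h2
  have hp : minpoly ℂ f = (X - C 1) ^ (Multiset.card (minpoly ℂ f).roots) := by
    conv_lhs => rw [hsplit.eq_prod_roots_of_monic hmon]
    have hrep : (minpoly ℂ f).roots.map (fun a => X - C a)
        = Multiset.replicate (Multiset.card (minpoly ℂ f).roots) (X - C 1) := by
      rw [Multiset.eq_replicate]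
      constructor
      · rw [Multiset.card_map]
      · intro b hb
        obtain ⟨a, ha, rfl⟩ := Multiset.mem_map.mp hb
        rw [hroots a ha]
    rw [hrep, Multiset.prod_replicate]
  have hann : aeval f (minpoly ℂ f) = 0 := minpoly.aeval ℂ f
  rw [hp] at hann
  simp only [map_pow, map_sub, aeval_X, aeval_C, _root_.map_one] at hann
  obtain ⟨k, hk⟩ : IsNilpotent (f - 1) := ⟨_, hann⟩
  refine ⟨k, ?_⟩
  have hMf : M - 1 = e.symm (f - 1) := by
    rw [map_sub, _root_.map_one, hf, AlgEquiv.symm_apply_apply]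
  rw [hMf, ← map_pow, hk, map_zero]

/-- Sylvester-type vanishing: if `P X Q = X` with `1 - P` invertible and
`Q - 1` nilpotent, then `X = 0`. -/
lemma aux_sylv₁ {α β : Type*} [Fintype α] [Fintype β] [DecidableEq α] [DecidableEq β]
    (P : Matrix α α ℂ) (Q : Matrix β β ℂ) (X : Matrix α β ℂ)
    (hPQ : P * X * Q = X) (hP : IsUnit (1 - P)) (hQ : IsNilpotent (Q - 1)) : X = 0 := by
  have hstep : (1 - P) * X = P * X * (Q - 1) := by
    rw [Matrix.sub_mul, Matrix.mul_sub, Matrix.one_mul, Matrix.mul_one, hPQ]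
  have claim : ∀ k : ℕ, (1 - P) ^ k * X = P ^ k * X * (Q - 1) ^ k := by
    intro k
    induction k with
    | zero => simp
    | succ k ih =>
      have hc : Commute P ((1 - P) ^ k) :=
        (((Commute.one_right P).sub_right (Commute.refl P)).pow_right k)
      calc (1 - P) ^ (k + 1) * X = (1 - P) ^ k * ((1 - P) * X) := by
            rw [pow_succ, Matrix.mul_assoc]
        _ = (1 - P) ^ k * (P * X * (Q - 1)) := by rw [hstep]
        _ = P * ((1 - P) ^ k * X) * (Q - 1) := by
            simp only [← Matrix.mul_assoc]
            rw [← hc.eq]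
        _ = P * (P ^ k * X * (Q - 1) ^ k) * (Q - 1) := by rw [ih]
        _ = P ^ (k + 1) * X * (Q - 1) ^ (k + 1) := by
            rw [pow_succ' P, pow_succ (Q - 1)]
            simp only [Matrix.mul_assoc]
  obtain ⟨k, hk⟩ := hQ
  have h0 : (1 - P) ^ k * X = 0 := by rw [claim k, hk, Matrix.mul_zero]
  obtain ⟨u, hu⟩ := hP.pow k
  calc X = (↑u⁻¹ : Matrix α α ℂ) * ((↑u : Matrix α α ℂ) * X) := by
        rw [← Matrix.mul_assoc, Units.inv_mul, Matrix.one_mul]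
    _ = 0 := by rw [hu, h0, Matrix.mul_zero]

/-- Sylvester-type vanishing: if `P X Q = X` with `1 - P` nilpotent and
`1 - Q` invertible, then `X = 0`. -/
lemma aux_sylv₂ {α β : Type*} [Fintype α] [Fintype β] [DecidableEq α] [DecidableEq β]
    (P : Matrix α α ℂ) (Q : Matrix β β ℂ) (X : Matrix α β ℂ)
    (hPQ : P * X * Q = X) (hP : IsNilpotent (1 - P)) (hQ : IsUnit (1 - Q)) : X = 0 := by
  have hstep : X * (Q - 1) = (1 - P) * (X * Q) := by
    rw [Matrix.mul_sub, Matrix.mul_one, Matrix.sub_mul, Matrix.one_mul, ← Matrix.mul_assoc, hPQ]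
  have claim : ∀ k : ℕ, X * (Q - 1) ^ k = (1 - P) ^ k * (X * Q ^ k) := by
    intro k
    induction k with
    | zero => simp
    | succ k ih =>
      have hc : Commute Q ((Q - 1) ^ k) :=
        (((Commute.refl Q).sub_right (Commute.one_right Q)).pow_right k)
      calc X * (Q - 1) ^ (k + 1) = (X * (Q - 1)) * (Q - 1) ^ k := by
            rw [pow_succ' (Q - 1), ← Matrix.mul_assoc]
        _ = (1 - P) * (X * (Q * (Q - 1) ^ k)) := by
            rw [hstep, Matrix.mul_assoc, Matrix.mul_assoc]
        _ = (1 - P) * ((X * (Q - 1) ^ k) * Q) := by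
            rw [hc.eq]
            simp only [Matrix.mul_assoc]
        _ = (1 - P) * (((1 - P) ^ k * (X * Q ^ k)) * Q) := by rw [ih]
        _ = (1 - P) ^ (k + 1) * (X * Q ^ (k + 1)) := by
            rw [pow_succ' (1 - P), pow_succ Q]
            simp only [Matrix.mul_assoc]
  obtain ⟨k, hk⟩ := hP
  have h0 : X * (Q - 1) ^ k = 0 := by rw [claim k, hk, Matrix.zero_mul]
  have hQ1 : IsUnit (Q - 1) := by
    have := hQ.neg
    rwa [neg_sub] at this
  obtain ⟨u, hu⟩ := hQ1.pow k
  calc X = (X * (↑u : Matrix β β ℂ)) * (↑u⁻¹ : Matrix β β ℂ) := by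
        rw [Matrix.mul_assoc, Units.mul_inv, Matrix.mul_one]
    _ = 0 := by rw [hu, h0, Matrix.zero_mul]

/-- suppose `B A B⁻¹ = Ā⁻¹` where `A = T ⊕ U` is block diagonal,
`T` has no eigenvalue `1` and `U` has `1` as its only eigenvalue. Then `B` is
block diagonal, `B = B₁ ⊕ B₄`, and `B₁ T B₁⁻¹ = T̄⁻¹`; in particular `T` is
c-reversible. -/
theorem reverser_block_diagonal {p q : ℕ} (T : GL (Fin p) ℂ) (U : GL (Fin q) ℂ)
    (A B : GL (Fin p ⊕ Fin q) ℂ)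
    (hA : (A : Matrix (Fin p ⊕ Fin q) (Fin p ⊕ Fin q) ℂ)
      = Matrix.fromBlocks (T : Matrix (Fin p) (Fin p) ℂ) 0 0
          (U : Matrix (Fin q) (Fin q) ℂ))
    (hT : (1 : ℂ) ∉ spectrum ℂ (T : Matrix (Fin p) (Fin p) ℂ))
    (hU : spectrum ℂ (U : Matrix (Fin q) (Fin q) ℂ) = {1})
    (hB : B * A * B⁻¹ = (Aff.glConj A)⁻¹) :
    (B : Matrix (Fin p ⊕ Fin q) (Fin p ⊕ Fin q) ℂ).toBlocks₁₂ = 0 ∧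
    (B : Matrix (Fin p ⊕ Fin q) (Fin p ⊕ Fin q) ℂ).toBlocks₂₁ = 0 ∧
    (∃ B₁ : GL (Fin p) ℂ,
      (B₁ : Matrix (Fin p) (Fin p) ℂ)
          = (B : Matrix (Fin p ⊕ Fin q) (Fin p ⊕ Fin q) ℂ).toBlocks₁₁ ∧
      B₁ * T * B₁⁻¹ = (Aff.glConj T)⁻¹) ∧
    ∃ S : GL (Fin p) ℂ, S * T * S⁻¹ = (Aff.glConj T)⁻¹ := by
  classical
  set Ms : Matrix (Fin p ⊕ Fin q) (Fin p ⊕ Fin q) ℂ := (B : Matrix (Fin p ⊕ Fin q) (Fin p ⊕ Fin q) ℂ) with hMs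
  set Tc : Matrix (Fin p) (Fin p) ℂ := (T : Matrix (Fin p) (Fin p) ℂ).map (starRingEnd ℂ) with hTcdef
  set Uc : Matrix (Fin q) (Fin q) ℂ := (U : Matrix (Fin q) (Fin q) ℂ).map (starRingEnd ℂ) with hUcdef
  -- unit-level identity Ā B A = B
  have hB' : (Aff.glConj A) * B * A = B := by
    have h1 : Aff.glConj A * (B * A * B⁻¹) * B = Aff.glConj A * (Aff.glConj A)⁻¹ * B := by
      rw [hB]
    simpa [mul_assoc] using h1
  -- matrix-level identity
  have hMeq : ((A : Matrix (Fin p ⊕ Fin q) (Fin p ⊕ Fin q) ℂ).map (starRingEnd ℂ)) * Ms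
      * (A : Matrix (Fin p ⊕ Fin q) (Fin p ⊕ Fin q) ℂ) = Ms := by
    have h2 := congrArg (fun g : GL (Fin p ⊕ Fin q) ℂ =>
      (g : Matrix (Fin p ⊕ Fin q) (Fin p ⊕ Fin q) ℂ)) hB'
    simpa [Aff.glConj, Units.coe_map, RingHom.mapMatrix_apply, hMs] using h2
  have hconjA : (A : Matrix (Fin p ⊕ Fin q) (Fin p ⊕ Fin q) ℂ).map (starRingEnd ℂ)
      = Matrix.fromBlocks Tc 0 0 Uc := by
    rw [hA, Matrix.fromBlocks_map]
    simp [hTcdef, hUcdef]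
  set B1 := Ms.toBlocks₁₁ with hB1def
  set B2 := Ms.toBlocks₁₂ with hB2def
  set B3 := Ms.toBlocks₂₁ with hB3def
  set B4 := Ms.toBlocks₂₂ with hB4def
  have hMb : Ms = Matrix.fromBlocks B1 B2 B3 B4 := (Matrix.fromBlocks_toBlocks Ms).symm
  have hkey : Matrix.fromBlocks (Tc * B1 * (T : Matrix (Fin p) (Fin p) ℂ))
      (Tc * B2 * (U : Matrix (Fin q) (Fin q) ℂ))
      (Uc * B3 * (T : Matrix (Fin p) (Fin p) ℂ))
      (Uc * B4 * (U : Matrix (Fin q) (Fin q) ℂ))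
      = Matrix.fromBlocks B1 B2 B3 B4 := by
    have h3 := hMeq
    rw [hconjA, hA, hMb] at h3
    simpa only [Matrix.fromBlocks_multiply, Matrix.mul_zero, Matrix.zero_mul, zero_mul, mul_zero,
      add_zero, zero_add] using h3
  have e11 : Tc * B1 * (T : Matrix (Fin p) (Fin p) ℂ) = B1 := by
    have := congrArg Matrix.toBlocks₁₁ hkey
    simpa only [Matrix.toBlocks_fromBlocks₁₁] using this
  have e12 : Tc * B2 * (U : Matrix (Fin q) (Fin q) ℂ) = B2 := by
    have := congrArg Matrix.toBlocks₁₂ hkey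
    simpa only [Matrix.toBlocks_fromBlocks₁₂] using this
  have e21 : Uc * B3 * (T : Matrix (Fin p) (Fin p) ℂ) = B3 := by
    have := congrArg Matrix.toBlocks₂₁ hkey
    simpa only [Matrix.toBlocks_fromBlocks₂₁] using this
  -- nilpotency and invertibility facts
  have hU1 : IsNilpotent ((U : Matrix (Fin q) (Fin q) ℂ) - 1) :=
    aux_nilpotent_of_spectrum _ (by rw [hU])
  have hUc1 : IsNilpotent (Uc - 1) := by
    have := hU1.map ((starRingEnd ℂ).mapMatrix)
    simpa [map_sub, _root_.map_one, RingHom.mapMatrix_apply, hUcdef] using this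
  have hTunit : IsUnit ((1 : Matrix (Fin p) (Fin p) ℂ) - T) := by
    have := spectrum.notMem_iff.mp hT
    simpa using this
  have hTcunit : IsUnit ((1 : Matrix (Fin p) (Fin p) ℂ) - Tc) := by
    have := hTunit.map ((starRingEnd ℂ).mapMatrix)
    simpa [map_sub, _root_.map_one, RingHom.mapMatrix_apply, hTcdef] using this
  -- off-diagonal blocks vanish
  have hB2 : B2 = 0 := aux_sylv₁ Tc (U : Matrix (Fin q) (Fin q) ℂ) B2 e12 hTcunit hU1
  have hB3 : B3 = 0 := by
    refine aux_sylv₂ Uc (T : Matrix (Fin p) (Fin p) ℂ) B3 e21 ?_ hTunit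
    have := hUc1.neg
    rwa [neg_sub] at this
  -- the (1,1) block is invertible
  have hdet : IsUnit Ms.det := (Matrix.isUnit_iff_isUnit_det Ms).mp ⟨B, rfl⟩
  have hdet1 : IsUnit B1.det := by
    have hMblocks : Ms = Matrix.fromBlocks B1 0 0 B4 := by rw [hMb, hB2, hB3]
    rw [hMblocks, Matrix.det_fromBlocks_zero₂₁] at hdet
    exact isUnit_of_mul_isUnit_left hdet
  obtain ⟨B₁, hB₁⟩ : IsUnit B1 := (Matrix.isUnit_iff_isUnit_det B1).mpr hdet1
  -- lift the (1,1)-block equation to GL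
  have hTc : ((Aff.glConj T : GL (Fin p) ℂ) : Matrix (Fin p) (Fin p) ℂ) = Tc := by
    simp [Aff.glConj, Units.coe_map, RingHom.mapMatrix_apply, hTcdef]
  have huniteq : Aff.glConj T * B₁ * T = B₁ := by
    apply Units.ext
    simpa [Units.val_mul, hTc, hB₁] using e11
  have hfinal : B₁ * T * B₁⁻¹ = (Aff.glConj T)⁻¹ := by
    have h2 : B₁ * T = (Aff.glConj T)⁻¹ * B₁ := by
      have h3 := congrArg (fun x => (Aff.glConj T)⁻¹ * x) huniteq
      simpa [mul_assoc] using h3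
    rw [h2, mul_assoc, mul_inv_cancel, mul_one]
  exact ⟨hB2, hB3, ⟨B₁, hB₁, hfinal⟩, ⟨B₁, hfinal⟩⟩
end
end

section
/- An element g ∈ Aff(n,ℂ) is a coninvolution (g ḡ = e) if and only if there exists h ∈ Aff(n,ℂ) such that g = h h̄⁻¹. Concretely, if g = (A,v) with A Ā = I and A v̄ + v = 0, then writing A = B B̄⁻¹ (possible by Horn–Johnson), h = (B, v/2) works. -/
open Matrix
noncomputable section

namespace AffHelper

open Polynomial

variable {n : ℕ}

lemma glConj_coe (B : GL (Fin n) ℂ) :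
    ((Aff.glConj B : GL (Fin n) ℂ) : Matrix (Fin n) (Fin n) ℂ)
      = (B : Matrix (Fin n) (Fin n) ℂ).map (starRingEnd ℂ) := rfl

lemma eval_det_add (A : Matrix (Fin n) (Fin n) ℂ) (z : ℂ) :
    ((-A).charpoly).eval z = (z • (1 : Matrix (Fin n) (Fin n) ℂ) + A).det := by
  have h := RingHom.map_det (evalRingHom z) (charmatrix (-A))
  simp only [coe_evalRingHom] at h
  rw [Matrix.charpoly, h]
  congr 1
  ext i j
  by_cases hij : i = j <;>
    simp [charmatrix_apply, Matrix.map_apply, Matrix.one_apply, hij,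
      Matrix.diagonal_apply, Matrix.add_apply, Matrix.smul_apply, smul_eq_mul]

lemma exists_S (A : Matrix (Fin n) (Fin n) ℂ)
    (hA : A * A.map (starRingEnd ℂ) = 1) :
    ∃ S : Matrix (Fin n) (Fin n) ℂ, IsUnit S.det ∧ A * S.map (starRingEnd ℂ) = S := by
  have hp0 : (-A).charpoly ≠ 0 := ((-A).charpoly_monic).ne_zero
  have hfin : {z : ℂ | ((-A).charpoly).IsRoot z}.Finite :=
    Polynomial.finite_setOf_isRoot hp0
  set f : ℝ → ℂ := fun t => (1 + t * Complex.I) / (1 - t * Complex.I) with hf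
  have hne : ∀ t : ℝ, (1 - (t : ℂ) * Complex.I) ≠ 0 := by
    intro t h0
    have := congrArg Complex.re h0
    simp [Complex.sub_re, Complex.mul_re] at this
  have hinj : Function.Injective f := by
    intro s t h
    simp only [hf] at h
    rw [div_eq_div_iff (hne s) (hne t)] at h
    have hst : (s : ℂ) = t := by
      linear_combination (-Complex.I / 2) * h + ((s : ℂ) - t) * Complex.I_sq
    exact_mod_cast hst
  have hnsub : ¬ (Set.range f ⊆ {z : ℂ | ((-A).charpoly).IsRoot z}) := fun hsub =>
    (Set.infinite_range_of_injective hinj) (hfin.subset hsub)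
  obtain ⟨z, hzmem, hz⟩ := Set.not_subset.mp hnsub
  obtain ⟨t, rfl⟩ := hzmem
  set μ : ℂ := 1 - t * Complex.I with hμdef
  have hμ : μ ≠ 0 := hne t
  have hconjμ : (starRingEnd ℂ) μ = 1 + t * Complex.I := by
    simp [hμdef, map_sub, _root_.map_mul, Complex.conj_I, Complex.conj_ofReal]
  have hμf : (starRingEnd ℂ) μ = μ * f t := by
    rw [hconjμ, hf]
    field_simp
    rw [mul_div_assoc, hμdef, div_self (hne t), mul_one]
  have hdet : (f t • (1 : Matrix (Fin n) (Fin n) ℂ) + A).det ≠ 0 := by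
    intro h0
    exact hz (by simpa [Polynomial.IsRoot, eval_det_add] using h0)
  refine ⟨μ • A + (starRingEnd ℂ) μ • 1, ?_, ?_⟩
  · have h1 : μ • A + (starRingEnd ℂ) μ • (1 : Matrix (Fin n) (Fin n) ℂ)
        = μ • (f t • 1 + A) := by
      rw [smul_add, smul_smul, ← hμf, add_comm]
    rw [h1, Matrix.det_smul]
    exact (IsUnit.mk0 _ (pow_ne_zero _ hμ)).mul (IsUnit.mk0 _ hdet)
  · have hmap : (μ • A + (starRingEnd ℂ) μ • (1 : Matrix (Fin n) (Fin n) ℂ)).map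
        (starRingEnd ℂ)
        = (starRingEnd ℂ) μ • A.map (starRingEnd ℂ) + μ • 1 := by
      ext i j
      by_cases hij : i = j <;>
        simp [Matrix.map_apply, Matrix.add_apply, Matrix.smul_apply, Matrix.one_apply,
          hij, map_add, _root_.map_mul, smul_eq_mul, mul_comm]
    rw [hmap, Matrix.mul_add, Matrix.mul_smul, Matrix.mul_smul, hA, Matrix.mul_one,
      add_comm]

lemma exists_B (A : GL (Fin n) ℂ) (hA : A * Aff.glConj A = 1) :
    ∃ B : GL (Fin n) ℂ, A = B * (Aff.glConj B)⁻¹ := by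
  have hm : (A : Matrix (Fin n) (Fin n) ℂ)
      * (A : Matrix (Fin n) (Fin n) ℂ).map (starRingEnd ℂ) = 1 :=
    congrArg Units.val hA
  obtain ⟨S, hS, hAS⟩ := exists_S _ hm
  have hSdet : IsUnit (S.map (starRingEnd ℂ)).det := by
    have hmd := (starRingEnd ℂ).map_det S
    rw [RingHom.mapMatrix_apply] at hmd
    rw [← hmd]
    exact IsUnit.mk0 _ (by simpa using hS.ne_zero)
  have hSu : IsUnit S := (Matrix.isUnit_iff_isUnit_det S).mpr hS
  refine ⟨hSu.unit, ?_⟩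
  apply Units.ext
  have hval : ((Aff.glConj hSu.unit : GL (Fin n) ℂ) : Matrix (Fin n) (Fin n) ℂ)
      = S.map (starRingEnd ℂ) := by
    rw [glConj_coe, IsUnit.unit_spec]
  show (A : Matrix (Fin n) (Fin n) ℂ) = _
  rw [Units.val_mul, Matrix.coe_units_inv, hval, IsUnit.unit_spec]
  calc (A : Matrix (Fin n) (Fin n) ℂ)
      = (A : Matrix (Fin n) (Fin n) ℂ) * S.map (starRingEnd ℂ)
          * (S.map (starRingEnd ℂ))⁻¹ :=
        (Matrix.mul_nonsing_inv_cancel_right _ _ hSdet).symm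
    _ = S * (S.map (starRingEnd ℂ))⁻¹ := by rw [hAS]

lemma star_mulVec' (M : Matrix (Fin n) (Fin n) ℂ) (w : Fin n → ℂ) :
    star (M *ᵥ w) = M.map (starRingEnd ℂ) *ᵥ star w := by
  funext i
  show star (∑ j, M i j * w j) = ∑ j, starRingEnd ℂ (M i j) * star (w j)
  rw [star_sum]
  exact Finset.sum_congr rfl fun j _ => star_mul' _ _

lemma bar_mul (g h : Aff n) : Aff.bar (g * h) = Aff.bar g * Aff.bar h := by
  ext : 1
  · exact _root_.map_mul Aff.glConj g.A h.A
  · show star ((g.A : Matrix (Fin n) (Fin n) ℂ) *ᵥ h.v + g.v)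
      = ((Aff.glConj g.A : GL (Fin n) ℂ) : Matrix (Fin n) (Fin n) ℂ) *ᵥ star h.v
        + star g.v
    rw [star_add, star_mulVec', glConj_coe]

lemma bar_one : Aff.bar (1 : Aff n) = 1 := by
  ext : 1
  · simp [Aff.bar]
  · show star (0 : Fin n → ℂ) = 0
    simp

lemma bar_inv (g : Aff n) : Aff.bar g⁻¹ = (Aff.bar g)⁻¹ :=
  eq_inv_of_mul_eq_one_left (by rw [← bar_mul, inv_mul_cancel, bar_one])

lemma bar_bar (g : Aff n) : Aff.bar (Aff.bar g) = g := by
  ext : 1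
  · apply Units.ext
    show ((g.A : Matrix (Fin n) (Fin n) ℂ).map (starRingEnd ℂ)).map (starRingEnd ℂ) = _
    ext i j
    simp [Matrix.map_apply]
  · exact star_star g.v

end AffHelper

/-- `g ∈ Aff(n, ℂ)` is a coninvolution iff `g = h h̄⁻¹` for some
`h ∈ Aff(n, ℂ)`. Concretely, if `g = (A, v)` is a coninvolution and
`A = B B̄⁻¹`, then `h = (B, v/2)` works. -/
theorem coninvolution_iff_h_hbar_inv {n : ℕ} (g : Aff n) :
    (Aff.IsConinvolution g ↔ ∃ h : Aff n, g = h * (Aff.bar h)⁻¹) ∧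
    (∀ B : GL (Fin n) ℂ, Aff.IsConinvolution g →
      g.A = B * (Aff.glConj B)⁻¹ →
      g = (⟨B, g.v / 2⟩ : Aff n) * (Aff.bar ⟨B, g.v / 2⟩)⁻¹) := by
  have key : ∀ B : GL (Fin n) ℂ, Aff.IsConinvolution g →
      g.A = B * (Aff.glConj B)⁻¹ →
      g = (⟨B, g.v / 2⟩ : Aff n) * (Aff.bar ⟨B, g.v / 2⟩)⁻¹ := by
    intro B hcon hA
    have hv : (g.A : Matrix (Fin n) (Fin n) ℂ) *ᵥ star g.v + g.v = 0 :=
      congrArg Aff.v hcon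
    have hv' : (g.A : Matrix (Fin n) (Fin n) ℂ) *ᵥ star g.v = -g.v :=
      eq_neg_of_add_eq_zero_left hv
    have hhalf : ∀ w : Fin n → ℂ, w / 2 = (2⁻¹ : ℂ) • w := by
      intro w; funext i
      simp [Pi.div_apply, div_eq_mul_inv, mul_comm]
    have hstar : star (g.v / 2) = (2⁻¹ : ℂ) • star g.v := by
      rw [hhalf]
      funext i
      simp [Pi.star_apply]
    ext : 1
    · exact hA
    · simp only [Aff.mul_v, Aff.inv_v, Aff.bar]
      rw [hstar, hhalf g.v, Matrix.mulVec_neg, Matrix.mulVec_mulVec,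
        ← Matrix.coe_units_inv, ← Units.val_mul, ← hA, Matrix.mulVec_smul, hv']
      funext i
      simp
      ring
  refine ⟨⟨?_, ?_⟩, key⟩
  · intro hcon
    have hAeq : g.A * Aff.glConj g.A = 1 := congrArg Aff.A hcon
    obtain ⟨B, hB⟩ := AffHelper.exists_B g.A hAeq
    exact ⟨⟨B, g.v / 2⟩, key B hcon hB⟩
  · rintro ⟨h, rfl⟩
    show h * (Aff.bar h)⁻¹ * Aff.bar (h * (Aff.bar h)⁻¹) = 1
    rw [AffHelper.bar_mul, AffHelper.bar_inv, AffHelper.bar_bar,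
      mul_assoc, ← mul_assoc (Aff.bar h)⁻¹, inv_mul_cancel, one_mul,
      mul_inv_cancel]
end
end

section
/- A matrix A ∈ Mₙ(ℂ) satisfies A Ā = I if and only if there exists a nonsingular S ∈ Mₙ(ℂ) such that A = S S̄⁻¹. -/
open Matrix
noncomputable section

/-- Horn–Johnson, Lemma 4.6.9: `A ∈ Mₙ(ℂ)` satisfies `A Ā = I`
iff there is a nonsingular `S` with `A = S S̄⁻¹`. -/
theorem coninvolutory_iff_S_Sbar_inv {n : ℕ} (A : Matrix (Fin n) (Fin n) ℂ) :
    A * A.map (starRingEnd ℂ) = 1 ↔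
      ∃ S : GL (Fin n) ℂ,
        A = (S : Matrix (Fin n) (Fin n) ℂ)
            * (((Aff.glConj S)⁻¹ : GL (Fin n) ℂ) : Matrix (Fin n) (Fin n) ℂ) := by
  constructor
  · intro hA
    -- choose t real with f t not in spectrum
    set f : ℝ → ℂ := fun t => -(((t : ℂ) - Complex.I) / ((t : ℂ) + Complex.I)) with hf
    have hden : ∀ t : ℝ, (t : ℂ) + Complex.I ≠ 0 := by
      intro t h
      have := congrArg Complex.im h
      simp at this
    have hinj : Function.Injective f := by
      intro t₁ t₂ h
      simp only [hf, neg_inj, div_eq_div_iff (hden t₁) (hden t₂)] at h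
      have h2 : (2 : ℂ) * Complex.I * t₁ = 2 * Complex.I * t₂ := by ring_nf at h ⊢; linear_combination h
      have : (t₁ : ℂ) = t₂ := by
        field_simp [Complex.I_ne_zero] at h2; exact_mod_cast h2
      exact_mod_cast this
    obtain ⟨t, ht⟩ :=
      ((A.finite_spectrum).preimage hinj.injOn).infinite_compl.nonempty
    have hspec : f t ∉ spectrum ℂ A := ht
    rw [spectrum.notMem_iff] at hspec
    set μ : ℂ := (t : ℂ) + Complex.I with hμ
    set ν : ℂ := (t : ℂ) - Complex.I with hν
    have hμ0 : μ ≠ 0 := hden t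
    have hμft : μ * f t = -ν := by
      simp only [hf, hμ, hν]
      field_simp [hden t]
    set S : Matrix (Fin n) (Fin n) ℂ := μ • A + ν • (1 : Matrix (Fin n) (Fin n) ℂ) with hS
    have hfact : S = μ • (A - f t • (1 : Matrix (Fin n) (Fin n) ℂ)) := by
      rw [hS, smul_sub, smul_smul, hμft, neg_smul, sub_neg_eq_add]
    have hunit1 : IsUnit (A - f t • (1 : Matrix (Fin n) (Fin n) ℂ)) := by
      have := hspec.neg
      rwa [Algebra.algebraMap_eq_smul_one, neg_sub] at this
    have hSu : IsUnit S := by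
      rw [Matrix.isUnit_iff_isUnit_det, hfact, Matrix.det_smul, isUnit_iff_ne_zero]
      exact mul_ne_zero (pow_ne_zero _ hμ0)
        (isUnit_iff_ne_zero.mp ((Matrix.isUnit_iff_isUnit_det _).mp hunit1))
    have hconjμ : (starRingEnd ℂ) μ = ν := by
      simp only [hμ, hν, map_add, Complex.conj_ofReal, Complex.conj_I]; ring
    have hconjν : (starRingEnd ℂ) ν = μ := by
      simp only [hμ, hν, map_sub, Complex.conj_ofReal, Complex.conj_I]; ring
    have hSbar : S.map (starRingEnd ℂ)
        = ν • A.map (starRingEnd ℂ) + μ • (1 : Matrix (Fin n) (Fin n) ℂ) := by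
      ext i j
      by_cases h : i = j <;>
        simp [hS, Matrix.map_apply, Matrix.one_apply, h, hconjμ, hconjν]
    have hAS : A * S.map (starRingEnd ℂ) = S := by
      rw [hSbar, Matrix.mul_add, Matrix.mul_smul, Matrix.mul_smul, hA, Matrix.mul_one, hS]
      abel
    have hSbu : IsUnit (S.map (starRingEnd ℂ)).det := by
      rw [← RingHom.mapMatrix_apply, ← RingHom.map_det]
      exact ((Matrix.isUnit_iff_isUnit_det S).mp hSu).map (starRingEnd ℂ)
    refine ⟨hSu.unit, ?_⟩
    have hcoe : ((Aff.glConj hSu.unit : GL (Fin n) ℂ) : Matrix (Fin n) (Fin n) ℂ)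
        = S.map (starRingEnd ℂ) := rfl
    rw [Matrix.coe_units_inv, hcoe]
    show A = S * (S.map (starRingEnd ℂ))⁻¹
    have hfin := Matrix.mul_nonsing_inv_cancel_right (S.map (starRingEnd ℂ)) A hSbu
    rw [hAS] at hfin
    exact hfin.symm
  · rintro ⟨S, rfl⟩
    have hconj2 : Aff.glConj (Aff.glConj S) = S := by
      ext i j
      simp [Aff.glConj, Matrix.map_apply]
    set U : GL (Fin n) ℂ := S * (Aff.glConj S)⁻¹ with hU
    have hbar : ((U : Matrix (Fin n) (Fin n) ℂ)).map (starRingEnd ℂ)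
        = ((Aff.glConj U : GL (Fin n) ℂ) : Matrix (Fin n) (Fin n) ℂ) := rfl
    have key : U * Aff.glConj U = 1 := by
      rw [hU, _root_.map_mul, _root_.map_inv, hconj2]
      group
    calc (U : Matrix (Fin n) (Fin n) ℂ) * ((U : Matrix (Fin n) (Fin n) ℂ)).map (starRingEnd ℂ)
        = ((U * Aff.glConj U : GL (Fin n) ℂ) : Matrix (Fin n) (Fin n) ℂ) := by rw [hbar]; rfl
      _ = 1 := by rw [key]; rfl
end
end
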